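/- Let X₁,…,Xₙ be i.i.d. Bernoulli(p) random variables (each equal to 1 with probability p and 0 with probability 1−p), and let M(X) = Σ_{i=1}^n X_i. Fix δ with δ ≥ P(M(X)=0) + P(M(X)=n), i.e. δ ≥ (1−p)^n + p^n, and set λ = sqrt(n·ln(2/δ)/2); assume 0 < λ < np and 0 < λ < n(1−p). Define ε = sqrt(ln(2/δ)/(2n)) · (1/(1−p) − 1/(sqrt(ln(2/δ)/(2n)) − p)) when p ≤ 1/2, and ε = sqrt(ln(2/δ)/(2n)) · (1/p − 1/(sqrt(ln(2/δ)/(2n)) − (1−p))) when p > 1/2. Then for every index j ≤ n and every set B of integers, P(Σ_{i=1}^n X_i ∈ B) ≤ e^ε · P(Σ_{i≠j} X_i ∈ B) + δ and P(Σ_{i≠j} X_i ∈ B) ≤ e^ε · P(Σ_{i=1}^n X_i ∈ B) + δ; that is, the sum mechanism on this data is (ε,δ)-noiseless private. -/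

import Mathlib

/-!
Both sums are binomial, with `n` and `n - 1` trials, and their point masses satisfy
`n (1 - p) b(n - 1, k) = (n - k) b(n, k)`. With `r = λ / n`, the ratio between the two masses at
`k` is therefore at most `e^ε` as long as `k` stays within `λ` of the mean, on the side relevant
to the direction of the inequality; this is where the formula for `ε` comes from. By Hoeffding's
inequality, each sum leaves its window with probability at most `exp (-2 λ² / n) = δ / 2`.
-/

open MeasureTheory ProbabilityTheory Finset Real

noncomputable def binomialMass (n : ℕ) (p : ℝ) (k : ℕ) : ℝ :=
  n.choose k * p ^ k * (1 - p) ^ (n - k)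

section binomialMass

variable {p : ℝ}

lemma binomialMass_nonneg (hp0 : 0 ≤ p) (hp1 : p ≤ 1) (n k : ℕ) : 0 ≤ binomialMass n p k := by
  unfold binomialMass
  have : 0 ≤ 1 - p := by linarith
  positivity

lemma binomialMass_succ_zero (m : ℕ) :
    binomialMass (m + 1) p 0 = (1 - p) * binomialMass m p 0 := by
  simp [binomialMass, pow_succ, mul_comm]

lemma binomialMass_succ_succ (m k : ℕ) :
    binomialMass (m + 1) p (k + 1) =
      (1 - p) * binomialMass m p (k + 1) + p * binomialMass m p k := by
  unfold binomialMass
  rw [Nat.choose_succ_succ, Nat.succ_sub_succ]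
  rcases le_or_gt (k + 1) m with hk | hk
  · rw [show m - k = m - (k + 1) + 1 by omega]
    push_cast
    ring
  · rw [Nat.choose_eq_zero_of_lt hk]
    push_cast
    ring

lemma succ_mul_binomialMass (m k : ℕ) :
    (m + 1) * (1 - p) * binomialMass m p k = (m + 1 - k) * binomialMass (m + 1) p k := by
  unfold binomialMass
  rcases le_or_gt k m with hk | hk
  · have hchoose : (m.choose k : ℝ) * (m + 1) = (m + 1).choose k * (m + 1 - k) := by
      have := congrArg (Nat.cast : ℕ → ℝ) (Nat.choose_mul_succ_eq m k)
      push_cast [Nat.cast_sub (by omega : k ≤ m + 1)] at this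
      exact this
    rw [show m + 1 - k = m - k + 1 by omega, pow_succ]
    linear_combination (p ^ k * (1 - p) ^ (m - k) * (1 - p)) * hchoose
  · rw [Nat.choose_eq_zero_of_lt hk]
    rcases (Nat.succ_le_of_lt hk).eq_or_lt with rfl | hk'
    · push_cast
      ring
    · rw [Nat.choose_eq_zero_of_lt hk']
      simp

lemma binomialMass_succ_le_mul {c : ℝ} (hp0 : 0 ≤ p) (hp1 : p < 1) (hc : 0 ≤ c) {m k : ℕ}
    (h : (m + 1) * (1 - p) ≤ c * (m + 1 - k)) :
    binomialMass (m + 1) p k ≤ c * binomialMass m p k := by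
  have hk : 0 < (m : ℝ) + 1 - k := by
    by_contra! hk
    nlinarith [mul_nonpos_of_nonneg_of_nonpos hc hk]
  refine le_of_mul_le_mul_left ?_ hk
  rw [← succ_mul_binomialMass]
  calc (m + 1) * (1 - p) * binomialMass m p k ≤ c * (m + 1 - k) * binomialMass m p k :=
        mul_le_mul_of_nonneg_right h (binomialMass_nonneg hp0 hp1.le m k)
    _ = (m + 1 - k) * (c * binomialMass m p k) := by ring

lemma binomialMass_le_mul_succ {c : ℝ} (hp0 : 0 ≤ p) (hp1 : p < 1) {m k : ℕ}
    (h : m + 1 - k ≤ c * ((m + 1) * (1 - p))) :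
    binomialMass m p k ≤ c * binomialMass (m + 1) p k := by
  have hq : 0 < ((m : ℝ) + 1) * (1 - p) := mul_pos (by positivity) (by linarith)
  refine le_of_mul_le_mul_left ?_ hq
  rw [succ_mul_binomialMass]
  calc (m + 1 - k) * binomialMass (m + 1) p k
      ≤ c * ((m + 1) * (1 - p)) * binomialMass (m + 1) p k :=
        mul_le_mul_of_nonneg_right h (binomialMass_nonneg hp0 hp1.le _ k)
    _ = (m + 1) * (1 - p) * (c * binomialMass (m + 1) p k) := by ring

end binomialMass

/-- The paper's `ε`, with `r` standing for `λ / n = √(log (2 / δ) / (2 n))`. -/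
noncomputable def noiselessEps (p r : ℝ) : ℝ :=
  if p ≤ 1 / 2 then r * (1 / (1 - p) - 1 / (r - p)) else r * (1 / p - 1 / (r - (1 - p)))

section noiselessEps

variable {p r : ℝ}

lemma div_sub_le_noiselessEps (hr : 0 ≤ r) (hrp : r < p) (hrq : r < 1 - p) :
    r / (1 - p - r) ≤ noiselessEps p r := by
  unfold noiselessEps
  split_ifs with hp
  · have : r * (1 / (1 - p) - 1 / (r - p)) = r / (1 - p) + r / (p - r) := by
      field_simp [(by linarith : 1 - p ≠ 0), (by linarith : r - p ≠ 0), (by linarith : p - r ≠ 0)]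
      ring
    rw [this]
    have : r / (1 - p - r) ≤ r / (p - r) :=
      div_le_div_of_nonneg_left hr (by linarith) (by linarith)
    have : 0 ≤ r / (1 - p) := div_nonneg hr (by linarith)
    linarith
  · have : r * (1 / p - 1 / (r - (1 - p))) = r / p + r / (1 - p - r) := by
      field_simp [(by linarith : p ≠ 0), (by linarith : r - (1 - p) ≠ 0),
        (by linarith : 1 - p - r ≠ 0)]
      ring
    rw [this]
    have : 0 ≤ r / p := div_nonneg hr (by linarith)
    linarith

lemma one_add_div_sub_le_exp_noiselessEps (hr : 0 ≤ r) (hrp : r < p) (hrq : r < 1 - p) :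
    1 + r / (1 - p - r) ≤ exp (noiselessEps p r) := by
  linarith [div_sub_le_noiselessEps hr hrp hrq, add_one_le_exp (noiselessEps p r)]

lemma sub_le_exp_noiselessEps_mul (hr : 0 ≤ r) (hrp : r < p) (hrq : r < 1 - p) :
    1 - p ≤ exp (noiselessEps p r) * (1 - p - r) := by
  have hqr : 1 - p - r ≠ 0 := by linarith
  calc 1 - p = (1 + r / (1 - p - r)) * (1 - p - r) := by field_simp; ring
    _ ≤ exp (noiselessEps p r) * (1 - p - r) := by
      gcongr
      exact one_add_div_sub_le_exp_noiselessEps hr hrp hrq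

lemma add_le_exp_noiselessEps_mul {N : ℝ} (hr : 0 ≤ r) (hrp : r < p) (hrq : r < 1 - p)
    (hN : 1 ≤ 4 * N * r ^ 2) :
    N * (1 - p) + p + N * r ≤ exp (noiselessEps p r) * (N * (1 - p)) := by
  have hqr : 0 < 1 - p - r := by linarith
  have hN0 : 0 ≤ N := by nlinarith
  -- `p (1 - p - r) ≤ p (1 - p) ≤ 1 / 4 ≤ N r²`
  have hkey : p + N * r ≤ N * (1 - p) * (r / (1 - p - r)) := by
    rw [mul_div_assoc', le_div_iff₀ hqr]
    nlinarith [sq_nonneg (1 - 2 * p), mul_nonneg hr (by linarith : (0 : ℝ) ≤ p)]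
  calc N * (1 - p) + p + N * r ≤ (1 + r / (1 - p - r)) * (N * (1 - p)) := by linarith
    _ ≤ exp (noiselessEps p r) * (N * (1 - p)) := by
      gcongr
      · nlinarith
      · exact one_add_div_sub_le_exp_noiselessEps hr hrp hrq

end noiselessEps

lemma measureReal_add_eq_of_ae_eq_zero_or_eq_one {Ω : Type*} [MeasurableSpace Ω]
    {μ : Measure Ω} [IsFiniteMeasure μ] {Y T : Ω → ℝ} (hY : Measurable Y) (hT : Measurable T)
    (hYT : IndepFun Y T μ) (h01 : ∀ᵐ ω ∂μ, Y ω = 0 ∨ Y ω = 1) (x : ℝ) :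
    μ.real {ω | Y ω + T ω = x} =
      μ.real {ω | Y ω = 0} * μ.real {ω | T ω = x} +
        μ.real {ω | Y ω = 1} * μ.real {ω | T ω = x - 1} := by
  have hsplit : {ω | Y ω + T ω = x} =ᵐ[μ]
      ((Y ⁻¹' {0} ∩ T ⁻¹' {x}) ∪ (Y ⁻¹' {1} ∩ T ⁻¹' {x - 1}) : Set Ω) := by
    refine Filter.eventuallyEq_set.2 ?_
    filter_upwards [h01] with ω hω
    rcases hω with h | h
    · simp [h]
    · simp [h, eq_sub_iff_add_eq, add_comm]
  have hdisj : Disjoint (Y ⁻¹' {0} ∩ T ⁻¹' {x}) (Y ⁻¹' {1} ∩ T ⁻¹' {x - 1}) :=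
    Set.disjoint_left.2 fun ω h0 h1 => by simp_all
  have hprod (a b : ℝ) :
      μ.real (Y ⁻¹' {a} ∩ T ⁻¹' {b}) = μ.real (Y ⁻¹' {a}) * μ.real (T ⁻¹' {b}) := by
    simp only [measureReal_def, hYT.measure_inter_preimage_eq_mul _ _ (measurableSet_singleton a)
      (measurableSet_singleton b), ENNReal.toReal_mul]
  rw [measureReal_congr hsplit, measureReal_union hdisj
    ((hY (measurableSet_singleton 1)).inter (hT (measurableSet_singleton _))), hprod, hprod]
  rfl

lemma measureReal_le_sum_le_exp {Ω ι : Type*} [MeasurableSpace Ω] {μ : Measure Ω}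
    {Y : ι → Ω → ℝ} (h_indep : iIndepFun Y μ) (hY : ∀ i, HasSubgaussianMGF (Y i) (1 / 4) μ)
    (s : Finset ι) {lam : ℝ} (hlam : 0 ≤ lam) :
    μ.real {ω | lam ≤ ∑ i ∈ s, Y i ω} ≤ exp (-2 * lam ^ 2 / s.card) := by
  convert HasSubgaussianMGF.measure_sum_ge_le_of_iIndepFun h_indep (fun i _ => hY i) hlam using 2
  push_cast
  rw [sum_const, nsmul_eq_mul]
  ring

structure IsBernoulliFamily {Ω ι : Type*} [MeasurableSpace Ω] (μ : Measure Ω)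
    (X : ι → Ω → ℝ) (p : ℝ) : Prop where
  measurable : ∀ i, Measurable (X i)
  indep : iIndepFun X μ
  measure_eq_one : ∀ i, μ {ω | X i ω = 1} = ENNReal.ofReal p
  measure_eq_zero : ∀ i, μ {ω | X i ω = 0} = ENNReal.ofReal (1 - p)

namespace IsBernoulliFamily

variable {Ω ι : Type*} [MeasurableSpace Ω] {μ : Measure Ω} {X : ι → Ω → ℝ} {p : ℝ}

lemma measureReal_eq_one (hB : IsBernoulliFamily μ X p) (hp0 : 0 ≤ p) (i : ι) :
    μ.real {ω | X i ω = 1} = p := by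
  rw [measureReal_def, hB.measure_eq_one, ENNReal.toReal_ofReal hp0]

lemma measureReal_eq_zero (hB : IsBernoulliFamily μ X p) (hp1 : p ≤ 1) (i : ι) :
    μ.real {ω | X i ω = 0} = 1 - p := by
  rw [measureReal_def, hB.measure_eq_zero, ENNReal.toReal_ofReal (by linarith)]

variable [IsProbabilityMeasure μ]

lemma ae_eq_zero_or_eq_one (hB : IsBernoulliFamily μ X p) (hp0 : 0 ≤ p) (hp1 : p ≤ 1)
    (i : ι) : ∀ᵐ ω ∂μ, X i ω = 0 ∨ X i ω = 1 := by
  have h0 := measurableSet_eq_fun (hB.measurable i) (measurable_const (a := (0 : ℝ)))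
  have h1 := measurableSet_eq_fun (hB.measurable i) (measurable_const (a := (1 : ℝ)))
  have hdisj : Disjoint {ω | X i ω = 0} {ω | X i ω = 1} :=
    Set.disjoint_left.2 fun ω h0 h1 => by simp_all
  have hcompl : {ω | ¬(X i ω = 0 ∨ X i ω = 1)} = ({ω | X i ω = 0} ∪ {ω | X i ω = 1})ᶜ := by
    ext
    simp
  rw [ae_iff, hcompl, prob_compl_eq_zero_iff (h0.union h1), measure_union hdisj h1,
    hB.measure_eq_zero, hB.measure_eq_one, ← ENNReal.ofReal_add (by linarith) hp0]
  simp

lemma ae_exists_sum_eq_natCast (hB : IsBernoulliFamily μ X p) (hp0 : 0 ≤ p) (hp1 : p ≤ 1)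
    (s : Finset ι) : ∀ᵐ ω ∂μ, ∃ k ≤ s.card, ∑ i ∈ s, X i ω = k := by
  classical
  filter_upwards [(Filter.eventually_all_finset s).2
    fun i _ => hB.ae_eq_zero_or_eq_one hp0 hp1 i] with ω hω
  refine ⟨#{i ∈ s | X i ω = 1}, card_filter_le _ _, ?_⟩
  rw [← Finset.sum_boole]
  exact sum_congr rfl fun i hi => by rcases hω i hi with h | h <;> simp [h]

lemma measureReal_sum_eq (hB : IsBernoulliFamily μ X p) (hp0 : 0 ≤ p) (hp1 : p ≤ 1)
    (s : Finset ι) (k : ℕ) : μ.real {ω | ∑ i ∈ s, X i ω = k} = binomialMass s.card p k := by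
  classical
  induction s using Finset.induction_on generalizing k with
  | empty => cases k <;> simp [binomialMass, (Nat.cast_add_one_ne_zero _).symm]
  | insert j s hj ih =>
    have hindep : IndepFun (X j) (fun ω => ∑ i ∈ s, X i ω) μ := by
      simpa [Finset.sum_fn] using (hB.indep.indepFun_finsetSum_of_notMem hB.measurable hj).symm
    simp only [sum_insert hj, card_insert_of_notMem hj]
    rw [measureReal_add_eq_of_ae_eq_zero_or_eq_one (hB.measurable j)
      (measurable_sum s fun i _ => hB.measurable i) hindep (hB.ae_eq_zero_or_eq_one hp0 hp1 j),
      hB.measureReal_eq_zero hp1, hB.measureReal_eq_one hp0]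
    cases k with
    | zero =>
      have hneg : μ.real {ω | ∑ i ∈ s, X i ω = (0 : ℕ) - 1} = 0 := by
        rw [measureReal_eq_zero_iff, measure_eq_zero_iff_ae_notMem]
        filter_upwards [hB.ae_exists_sum_eq_natCast hp0 hp1 s] with ω hω
        obtain ⟨m, -, hm⟩ := hω
        simp only [hm, Nat.cast_zero, zero_sub]
        have := m.cast_nonneg (α := ℝ)
        intro h
        linarith
      rw [hneg, ih, binomialMass_succ_zero]
      ring
    | succ k =>
      rw [Nat.cast_succ, add_sub_cancel_right, ← Nat.cast_succ, ih, ih, binomialMass_succ_succ]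

-- Any bound `N ≥ #s` will do: it lets the laws of sums over different sets be compared termwise.
open scoped Classical in
lemma measureReal_sum_mem (hB : IsBernoulliFamily μ X p) (hp0 : 0 ≤ p) (hp1 : p ≤ 1)
    {s : Finset ι} {N : ℕ} (hN : s.card ≤ N) (A : Set ℝ) :
    μ.real {ω | ∑ i ∈ s, X i ω ∈ A} =
      ∑ k ∈ (range (N + 1)).filter (fun k : ℕ => (k : ℝ) ∈ A), binomialMass s.card p k := by
  have hS : Measurable fun ω => ∑ i ∈ s, X i ω := measurable_sum s fun i _ => hB.measurable i
  rw [← sum_congr rfl fun k _ => hB.measureReal_sum_eq hp0 hp1 s k, ← measureReal_biUnion_finset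
    (fun a _ b _ hab => Set.disjoint_left.2 fun ω ha hb =>
      hab (Nat.cast_injective (ha.symm.trans hb)))
    (fun k _ => measurableSet_eq_fun hS measurable_const)]
  refine measureReal_congr (Filter.eventuallyEq_set.2 ?_)
  filter_upwards [hB.ae_exists_sum_eq_natCast hp0 hp1 s] with ω hω
  obtain ⟨k, hk, hSk⟩ := hω
  simp only [Set.mem_ofPred_eq, Set.mem_iUnion, exists_prop, mem_filter, mem_range, hSk,
    Nat.cast_inj]
  exact ⟨fun h => ⟨k, ⟨by omega, h⟩, rfl⟩, fun ⟨_, ⟨_, h⟩, e⟩ => e ▸ h⟩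

lemma measureReal_sum_mem_le_mul (hB : IsBernoulliFamily μ X p) (hp0 : 0 ≤ p) (hp1 : p ≤ 1)
    {s t : Finset ι} {A : Set ℝ} {c : ℝ}
    (h : ∀ k : ℕ, (k : ℝ) ∈ A → binomialMass s.card p k ≤ c * binomialMass t.card p k) :
    μ.real {ω | ∑ i ∈ s, X i ω ∈ A} ≤ c * μ.real {ω | ∑ i ∈ t, X i ω ∈ A} := by
  classical
  rw [hB.measureReal_sum_mem hp0 hp1 (Nat.le_add_right s.card t.card),
    hB.measureReal_sum_mem hp0 hp1 (Nat.le_add_left t.card s.card), mul_sum]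
  exact sum_le_sum fun k hk => h k (mem_filter.1 hk).2

lemma measureReal_sum_mem_le_mul_add (hB : IsBernoulliFamily μ X p) (hp0 : 0 ≤ p) (hp1 : p ≤ 1)
    {s t : Finset ι} {c : ℝ} (hc : 0 ≤ c) (G : Set ℝ)
    (hG : ∀ k : ℕ, (k : ℝ) ∈ G → binomialMass s.card p k ≤ c * binomialMass t.card p k)
    (B : Set ℝ) :
    μ.real {ω | ∑ i ∈ s, X i ω ∈ B} ≤
      c * μ.real {ω | ∑ i ∈ t, X i ω ∈ B} + μ.real {ω | ∑ i ∈ s, X i ω ∉ G} :=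
  calc μ.real {ω | ∑ i ∈ s, X i ω ∈ B}
      ≤ μ.real ({ω | ∑ i ∈ s, X i ω ∈ B ∩ G} ∪ {ω | ∑ i ∈ s, X i ω ∉ G}) :=
        measureReal_mono fun ω (hω : _ ∈ B) => by
          by_cases hG : ∑ i ∈ s, X i ω ∈ G <;> simp_all
    _ ≤ μ.real {ω | ∑ i ∈ s, X i ω ∈ B ∩ G} + μ.real {ω | ∑ i ∈ s, X i ω ∉ G} :=
        measureReal_union_le _ _
    _ ≤ c * μ.real {ω | ∑ i ∈ t, X i ω ∈ B ∩ G} + μ.real {ω | ∑ i ∈ s, X i ω ∉ G} := by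
        gcongr
        exact hB.measureReal_sum_mem_le_mul hp0 hp1 fun k hk => hG k hk.2
    _ ≤ c * μ.real {ω | ∑ i ∈ t, X i ω ∈ B} + μ.real {ω | ∑ i ∈ s, X i ω ∉ G} := by
        gcongr c * ?_ + _
        exact measureReal_mono (Set.preimage_mono Set.inter_subset_left)

lemma integral_eq (hB : IsBernoulliFamily μ X p) (hp0 : 0 ≤ p) (hp1 : p ≤ 1) (i : ι) :
    μ[X i] = p := by
  have h1 := measurableSet_eq_fun (hB.measurable i) (measurable_const (a := (1 : ℝ)))
  rw [← hB.measureReal_eq_one hp0 i, ← integral_indicator_one h1]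
  refine integral_congr_ae ?_
  filter_upwards [hB.ae_eq_zero_or_eq_one hp0 hp1 i] with ω hω
  rcases hω with h | h <;> simp [h]

lemma hasSubgaussianMGF_sub (hB : IsBernoulliFamily μ X p) (hp0 : 0 ≤ p) (hp1 : p ≤ 1)
    (i : ι) : HasSubgaussianMGF (fun ω => X i ω - p) (1 / 4) μ := by
  have hIcc : ∀ᵐ ω ∂μ, X i ω ∈ Set.Icc 0 1 := by
    filter_upwards [hB.ae_eq_zero_or_eq_one hp0 hp1 i] with ω hω
    rcases hω with h | h <;> simp [h]
  have h := hasSubgaussianMGF_of_mem_Icc (hB.measurable i).aemeasurable hIcc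
  rw [hB.integral_eq hp0 hp1] at h
  convert h using 1
  norm_num

lemma measureReal_card_mul_add_le_sum (hB : IsBernoulliFamily μ X p) (hp0 : 0 ≤ p)
    (hp1 : p ≤ 1) (s : Finset ι) {lam : ℝ} (hlam : 0 ≤ lam) :
    μ.real {ω | s.card * p + lam ≤ ∑ i ∈ s, X i ω} ≤ exp (-2 * lam ^ 2 / s.card) := by
  convert measureReal_le_sum_le_exp (hB.indep.comp (fun _ x => x - p)
    fun _ => measurable_id.sub_const p) (hB.hasSubgaussianMGF_sub hp0 hp1) s hlam using 2
  ext ω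
  simp only [Set.mem_ofPred_eq, Function.comp_apply, sum_sub_distrib, sum_const, nsmul_eq_mul]
  constructor <;> intro <;> linarith

lemma measureReal_sum_le_card_mul_sub (hB : IsBernoulliFamily μ X p) (hp0 : 0 ≤ p)
    (hp1 : p ≤ 1) (s : Finset ι) {lam : ℝ} (hlam : 0 ≤ lam) :
    μ.real {ω | ∑ i ∈ s, X i ω ≤ s.card * p - lam} ≤ exp (-2 * lam ^ 2 / s.card) := by
  convert measureReal_le_sum_le_exp (hB.indep.comp (fun _ x => -(x - p))
    fun _ => (measurable_id.sub_const p).neg) (fun i => (hB.hasSubgaussianMGF_sub hp0 hp1 i).neg)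
    s hlam using 2
  ext ω
  simp only [Set.mem_ofPred_eq, Function.comp_apply, sum_neg_distrib, sum_sub_distrib, sum_const,
    nsmul_eq_mul]
  constructor <;> intro <;> linarith

lemma measureReal_sum_mem_le_of_card_eq_add_one (hB : IsBernoulliFamily μ X p)
    {s t : Finset ι} (hst : s.card = t.card + 1) {r : ℝ} (hr : 0 ≤ r) (hrp : r < p)
    (hrq : r < 1 - p) (B : Set ℝ) :
    μ.real {ω | ∑ i ∈ s, X i ω ∈ B} ≤
      exp (noiselessEps p r) * μ.real {ω | ∑ i ∈ t, X i ω ∈ B} + exp (-2 * s.card * r ^ 2) := by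
  have hp0 : 0 ≤ p := by linarith
  have hp1 : p ≤ 1 := by linarith
  have hs : (s.card : ℝ) = t.card + 1 := by exact_mod_cast hst
  refine (hB.measureReal_sum_mem_le_mul_add hp0 hp1 (exp_pos _).le
    (Set.Iic (s.card * p + s.card * r)) (fun k hk => ?_) B).trans (add_le_add le_rfl ?_)
  · rw [Set.mem_Iic, hs] at hk
    rw [hst]
    refine binomialMass_succ_le_mul hp0 (by linarith) (exp_pos _).le ?_
    calc (t.card + 1) * (1 - p)
        ≤ (t.card + 1) * (exp (noiselessEps p r) * (1 - p - r)) := by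
          gcongr
          exact sub_le_exp_noiselessEps_mul hr hrp hrq
      _ = exp (noiselessEps p r) * ((t.card + 1) * (1 - p - r)) := by ring
      _ ≤ exp (noiselessEps p r) * (t.card + 1 - k) := by gcongr; linarith
  · calc μ.real {ω | ∑ i ∈ s, X i ω ∉ Set.Iic (s.card * p + s.card * r)}
        ≤ μ.real {ω | s.card * p + s.card * r ≤ ∑ i ∈ s, X i ω} :=
          measureReal_mono fun ω hω => by
            simp only [Set.mem_ofPred_eq, Set.mem_Iic, not_le] at hω ⊢
            exact hω.le
      _ ≤ exp (-2 * (s.card * r) ^ 2 / s.card) :=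
          hB.measureReal_card_mul_add_le_sum hp0 hp1 s (by positivity)
      _ = exp (-2 * s.card * r ^ 2) := by
          rw [hs]
          field_simp

lemma measureReal_sum_mem_le_of_card_add_one_eq (hB : IsBernoulliFamily μ X p)
    {s t : Finset ι} (hst : s.card + 1 = t.card) (hs : s.Nonempty) {r : ℝ} (hr : 0 ≤ r)
    (hrp : r < p) (hrq : r < 1 - p) (hr2 : 1 ≤ 4 * t.card * r ^ 2) (B : Set ℝ) :
    μ.real {ω | ∑ i ∈ s, X i ω ∈ B} ≤
      exp (noiselessEps p r) * μ.real {ω | ∑ i ∈ t, X i ω ∈ B} + exp (-2 * t.card * r ^ 2) := by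
  have hp0 : 0 ≤ p := by linarith
  have hp1 : p ≤ 1 := by linarith
  have ht : (t.card : ℝ) = s.card + 1 := by exact_mod_cast hst.symm
  have hs0 : (0 : ℝ) < s.card := by exact_mod_cast hs.card_pos
  refine (hB.measureReal_sum_mem_le_mul_add hp0 hp1 (exp_pos _).le
    (Set.Ici (s.card * p - t.card * r)) (fun k hk => ?_) B).trans (add_le_add le_rfl ?_)
  · rw [Set.mem_Ici] at hk
    rw [← hst]
    refine binomialMass_le_mul_succ hp0 (by linarith) ?_
    have := add_le_exp_noiselessEps_mul hr hrp hrq hr2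
    rw [ht] at this hk
    linarith
  · calc μ.real {ω | ∑ i ∈ s, X i ω ∉ Set.Ici (s.card * p - t.card * r)}
        ≤ μ.real {ω | ∑ i ∈ s, X i ω ≤ s.card * p - t.card * r} :=
          measureReal_mono fun ω hω => by
            simp only [Set.mem_ofPred_eq, Set.mem_Ici, not_le] at hω ⊢
            exact hω.le
      _ ≤ exp (-2 * (t.card * r) ^ 2 / s.card) :=
          hB.measureReal_sum_le_card_mul_sub hp0 hp1 s (by positivity)
      _ ≤ exp (-2 * t.card * r ^ 2) := by
          gcongr
          rw [div_le_iff₀ hs0, ht]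
          nlinarith [sq_nonneg r]

theorem sum_erase_privacy [Fintype ι] [DecidableEq ι] (hB : IsBernoulliFamily μ X p) {r : ℝ}
    (hr : 0 ≤ r) (hrp : r < p) (hrq : r < 1 - p) (hι : 2 ≤ Fintype.card ι)
    (hr2 : 1 ≤ 4 * Fintype.card ι * r ^ 2) (j : ι) (B : Set ℝ) :
    μ.real {ω | ∑ i, X i ω ∈ B} ≤ exp (noiselessEps p r) *
        μ.real {ω | ∑ i ∈ univ.erase j, X i ω ∈ B} + exp (-2 * Fintype.card ι * r ^ 2) ∧
      μ.real {ω | ∑ i ∈ univ.erase j, X i ω ∈ B} ≤ exp (noiselessEps p r) *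
        μ.real {ω | ∑ i, X i ω ∈ B} + exp (-2 * Fintype.card ι * r ^ 2) := by
  have hcard : (univ.erase j).card + 1 = (univ : Finset ι).card :=
    card_erase_add_one (mem_univ j)
  have herase : (univ.erase j).Nonempty := by
    rw [← card_pos, card_erase_of_mem (mem_univ j), card_univ]
    omega
  rw [← card_univ] at hr2 ⊢
  exact ⟨hB.measureReal_sum_mem_le_of_card_eq_add_one hcard.symm hr hrp hrq B,
    hB.measureReal_sum_mem_le_of_card_add_one_eq hcard herase hr hrp hrq hr2 B⟩

end IsBernoulliFamily

lemma sqrt_mul_div_two {n : ℝ} (hn : 0 ≤ n) (L : ℝ) :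
    sqrt (n * L / 2) = n * sqrt (L / (2 * n)) := by
  rcases hn.eq_or_lt with rfl | hn
  · simp
  rw [show n * L / 2 = n ^ 2 * (L / (2 * n)) by field_simp, sqrt_mul (sq_nonneg n), sqrt_sq hn.le]

theorem bernoulli_sum_noiseless_privacy_fixed_delta_general
    {Ω : Type*} [MeasurableSpace Ω] (μ : Measure Ω) [IsProbabilityMeasure μ]
    (n : ℕ) (p : ℝ) (hp0 : 0 < p) (hp1 : p < 1)
    (X : Fin n → Ω → ℝ) (hXmeas : ∀ i, Measurable (X i))
    (hindep : iIndepFun X μ)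
    (hBern1 : ∀ i, μ {ω | X i ω = 1} = ENNReal.ofReal p)
    (hBern0 : ∀ i, μ {ω | X i ω = 0} = ENNReal.ofReal (1 - p))
    (δ : ℝ) (hδ : (1 - p) ^ n + p ^ n ≤ δ)
    (lam : ℝ) (hlam : lam = Real.sqrt ((n : ℝ) * Real.log (2 / δ) / 2))
    (hlam1 : lam < (n : ℝ) * p) (hlam2 : lam < (n : ℝ) * (1 - p))
    (ε : ℝ)
    (hε : ε = if p ≤ 1 / 2 then
        Real.sqrt (Real.log (2 / δ) / (2 * (n : ℝ))) *
          (1 / (1 - p) - 1 / (Real.sqrt (Real.log (2 / δ) / (2 * (n : ℝ))) - p))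
      else
        Real.sqrt (Real.log (2 / δ) / (2 * (n : ℝ))) *
          (1 / p - 1 / (Real.sqrt (Real.log (2 / δ) / (2 * (n : ℝ))) - (1 - p)))) :
    ∀ j : Fin n, ∀ B : Set ℝ, MeasurableSet B →
      (μ {ω | (∑ i, X i ω) ∈ B}).toReal
          ≤ Real.exp ε * (μ {ω | (∑ i ∈ Finset.univ.erase j, X i ω) ∈ B}).toReal + δ ∧
      (μ {ω | (∑ i ∈ Finset.univ.erase j, X i ω) ∈ B}).toReal
          ≤ Real.exp ε * (μ {ω | (∑ i, X i ω) ∈ B}).toReal + δ := by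
  intro j B _
  rcases le_or_gt 1 δ with hδ1 | hδ1
  · have h (S T : Set Ω) : μ.real S ≤ exp ε * μ.real T + δ := by
      nlinarith [measureReal_le_one (μ := μ) (s := S), measureReal_nonneg (μ := μ) (s := T),
        exp_pos ε]
    exact ⟨h _ _, h _ _⟩
  have hn : 2 ≤ n := by
    by_contra! hn
    interval_cases n <;> simp at hδ <;> linarith
  have hn0 : (0 : ℝ) < n := by positivity
  have hδ0 : 0 < δ := lt_of_lt_of_le (add_pos (pow_pos (by linarith) n) (pow_pos hp0 n)) hδ
  have hL : log 2 < log (2 / δ) := log_lt_log two_pos (by rw [lt_div_iff₀ hδ0]; linarith)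
  set r := sqrt (log (2 / δ) / (2 * n)) with hr
  have hr2 : 2 * n * r ^ 2 = log (2 / δ) := by
    rw [hr, sq_sqrt (div_nonneg (by linarith [log_pos one_lt_two]) (by positivity))]
    field_simp
  have hlam_r : lam = n * r := by rw [hlam, sqrt_mul_div_two hn0.le]
  have htail : exp (-2 * n * r ^ 2) ≤ δ := by
    rw [show -2 * n * r ^ 2 = -log (2 / δ) by linarith, exp_neg, exp_log (by positivity), inv_div]
    linarith
  obtain ⟨h1, h2⟩ := IsBernoulliFamily.sum_erase_privacy ⟨hXmeas, hindep, hBern1, hBern0⟩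
    (sqrt_nonneg _) (lt_of_mul_lt_mul_left (hlam_r ▸ hlam1) hn0.le)
    (lt_of_mul_lt_mul_left (hlam_r ▸ hlam2) hn0.le) (by simpa using hn)
    (by rw [Fintype.card_fin]; linarith [log_two_gt_d9]) j B
  rw [Fintype.card_fin] at h1 h2
  subst hε
  exact ⟨h1.trans (add_le_add le_rfl htail), h2.trans (add_le_add le_rfl htail)⟩

/-- Noiseless privacy of the sum of i.i.d. Bernoulli(p) variables, for fixed `δ`:
for every index `j` and every (measurable) set `B`, the probability that the full sum lies
in `B` is at most `e^ε` times the probability that the sum with coordinate `j` removed lies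
in `B`, plus `δ`, and symmetrically. -/
theorem bernoulli_sum_noiseless_privacy_fixed_delta
    {Ω : Type*} [MeasurableSpace Ω] (μ : Measure Ω) [IsProbabilityMeasure μ]
    (n : ℕ) (hn : 1 ≤ n) (p : ℝ) (hp0 : 0 < p) (hp1 : p < 1)
    (X : Fin n → Ω → ℝ) (hXmeas : ∀ i, Measurable (X i))
    (hindep : iIndepFun X μ)
    (hBern1 : ∀ i, μ {ω | X i ω = 1} = ENNReal.ofReal p)
    (hBern0 : ∀ i, μ {ω | X i ω = 0} = ENNReal.ofReal (1 - p))
    (δ : ℝ) (hδ : (1 - p) ^ n + p ^ n ≤ δ)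
    (lam : ℝ) (hlam : lam = Real.sqrt ((n : ℝ) * Real.log (2 / δ) / 2))
    (hlam0 : 0 < lam) (hlam1 : lam < (n : ℝ) * p) (hlam2 : lam < (n : ℝ) * (1 - p))
    (ε : ℝ)
    (hε : ε = if p ≤ 1 / 2 then
        Real.sqrt (Real.log (2 / δ) / (2 * (n : ℝ))) *
          (1 / (1 - p) - 1 / (Real.sqrt (Real.log (2 / δ) / (2 * (n : ℝ))) - p))
      else
        Real.sqrt (Real.log (2 / δ) / (2 * (n : ℝ))) *
          (1 / p - 1 / (Real.sqrt (Real.log (2 / δ) / (2 * (n : ℝ))) - (1 - p)))) :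
    ∀ j : Fin n, ∀ B : Set ℝ, MeasurableSet B →
      (μ {ω | (∑ i, X i ω) ∈ B}).toReal
          ≤ Real.exp ε * (μ {ω | (∑ i ∈ Finset.univ.erase j, X i ω) ∈ B}).toReal + δ ∧
      (μ {ω | (∑ i ∈ Finset.univ.erase j, X i ω) ∈ B}).toReal
          ≤ Real.exp ε * (μ {ω | (∑ i, X i ω) ∈ B}).toReal + δ :=
  bernoulli_sum_noiseless_privacy_fixed_delta_general μ n p hp0 hp1 X hXmeas hindep hBern1 hBern0 δ
    hδ lam hlam hlam1 hlam2 ε hε
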